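/- arXiv:2101.12103 — 2 statements merged into one kernel-verified Lean document; each statement's English description precedes it below -/
import Mathlib

section
/- Let d ≥ 1 and let I ⊂ ℤ^d∖{0} be a finite set of the form I = I₁ ∪ I₂, where I₁ and I₂ are nonempty and every vector of I₁ is orthogonal to every vector of I₂. Then for any m₁ ∈ I₁ and m₂ ∈ I₂ and every g ∈ H_∞(I), ∫_{[0,2π]^d} g(x) cos⟨x, m₁+m₂⟩ dx = 0; in particular H_∞(I) is not uniformly dense in the continuous (2πℤ^d)-periodic functions ℝ^d → ℝ. -/
open Real MeasureTheory

/-- ⟨x, m⟩ = ∑ x_j m_j for x ∈ ℝ^d, m ∈ ℤ^d. -/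
noncomputable def ip (d : ℕ) (x : Fin d → ℝ) (m : Fin d → ℤ) : ℝ :=
  ∑ j, x j * (m j : ℝ)

/-- Integer inner product on ℤ^d. -/
def ipZ (d : ℕ) (m l : Fin d → ℤ) : ℤ := ∑ j, m j * l j

/-- c_m(x) = cos⟨x,m⟩. -/
noncomputable def cmap (d : ℕ) (m : Fin d → ℤ) : (Fin d → ℝ) → ℝ :=
  fun x => Real.cos (ip d x m)

/-- s_m(x) = sin⟨x,m⟩. -/
noncomputable def smap (d : ℕ) (m : Fin d → ℤ) : (Fin d → ℝ) → ℝ :=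
  fun x => Real.sin (ip d x m)

/-- B(φ)(x) = ∑_j (∂_{x_j} φ(x))². -/
noncomputable def Bop (d : ℕ) (φ : (Fin d → ℝ) → ℝ) : (Fin d → ℝ) → ℝ :=
  fun x => ∑ j, (fderiv ℝ φ x (Pi.single j 1)) ^ 2

/-- Functions representable as θ₀ − ∑_{j=1}^n B(θ_j) with θ's in H, n ≥ 1. -/
noncomputable def BRep (d : ℕ) (H : Set ((Fin d → ℝ) → ℝ)) : Set ((Fin d → ℝ) → ℝ) :=
  { f | ∃ n : ℕ, 1 ≤ n ∧ ∃ θ₀ ∈ H, ∃ θ : Fin n → (Fin d → ℝ) → ℝ,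
      (∀ j, θ j ∈ H) ∧ f = θ₀ - ∑ j, Bop d (θ j) }

/-- F(H): f such that both f and −f are representable. -/
noncomputable def Fop (d : ℕ) (H : Set ((Fin d → ℝ) → ℝ)) : Set ((Fin d → ℝ) → ℝ) :=
  { f | f ∈ BRep d H ∧ -f ∈ BRep d H }

/-- H(I): span of {1} ∪ {c_k, s_k : k ∈ I}. -/
noncomputable def H0 (d : ℕ) (I : Finset (Fin d → ℤ)) : Set ((Fin d → ℝ) → ℝ) :=
  ↑(Submodule.span ℝ
      ({fun _ => (1:ℝ)} ∪ ⋃ k ∈ (I : Set (Fin d → ℤ)), {cmap d k, smap d k}))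

noncomputable def HSeq (d : ℕ) (I : Finset (Fin d → ℤ)) : ℕ → Set ((Fin d → ℝ) → ℝ)
  | 0 => H0 d I
  | j + 1 => Fop d (HSeq d I j)

/-- H_∞(I) = ⋃_j H_j(I). -/
noncomputable def Hinf (d : ℕ) (I : Finset (Fin d → ℤ)) : Set ((Fin d → ℝ) → ℝ) :=
  ⋃ j, HSeq d I j

/-- I generates ℤ^d over ℤ. -/
def IsGenerator (d : ℕ) (I : Finset (Fin d → ℤ)) : Prop :=
  ∀ n : Fin d → ℤ, ∃ a : (Fin d → ℤ) → ℤ, n = ∑ k ∈ I, a k • k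

/-- Connectedness condition of Proposition 2.5. -/
def ConnectedSet (d : ℕ) (I : Finset (Fin d → ℤ)) : Prop :=
  ∀ l ∈ I, ∀ m ∈ I, ∃ k : ℕ, ∃ n : Fin (k + 1) → (Fin d → ℤ),
    (∀ j, n j ∈ I) ∧ ipZ d l (n 0) ≠ 0 ∧
    (∀ j : Fin k, ipZ d (n j.castSucc) (n j.succ) ≠ 0) ∧
    ipZ d (n (Fin.last k)) m ≠ 0

/-- (2πℤ^d)-periodicity for real-valued functions. -/
def Periodic2pi (d : ℕ) (f : (Fin d → ℝ) → ℝ) : Prop :=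
  ∀ (x : Fin d → ℝ) (k : Fin d → ℤ), f (x + fun j => 2 * Real.pi * (k j : ℝ)) = f x

/-! Let `G₁, G₂` be the subgroups generated by `I₁, I₂` and `M = G₁ ∪ G₂`. Two non-orthogonal
frequencies of `M` lie in the same `Gᵢ`, so their sum and difference are again in `M`. Since
`∇cos(⟨x, k⟩ + a) · ∇cos(⟨x, l⟩ + b)` is `⟨k, l⟩` times a combination of waves of frequencies
`k ± l`, the span of the waves with frequencies in `M` is stable under `B` and hence contains
`H_∞(I)`. Neither `m₁ + m₂` nor its negative lies in `M` (otherwise `m₂ ∈ G₁` or `m₁ ∈ G₂` would be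
orthogonal to itself), so `cos⟨·, m₁ + m₂⟩` is `L²`-orthogonal to `H_∞(I)` on the cube, which keeps
it at uniform distance at least `1/4` from `H_∞(I)`. -/

lemma ip_add_right (d : ℕ) (x : Fin d → ℝ) (k l : Fin d → ℤ) :
    ip d x (k + l) = ip d x k + ip d x l := by
  simp [ip, mul_add, Finset.sum_add_distrib]

lemma ip_sub_right (d : ℕ) (x : Fin d → ℝ) (k l : Fin d → ℤ) :
    ip d x (k - l) = ip d x k - ip d x l := by
  simp [ip, mul_sub, Finset.sum_sub_distrib]

@[fun_prop]
lemma continuous_ip (d : ℕ) (k : Fin d → ℤ) : Continuous fun x => ip d x k := by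
  unfold ip; fun_prop

lemma periodic2pi_cos_ip (d : ℕ) (m : Fin d → ℤ) : Periodic2pi d fun x => Real.cos (ip d x m) := by
  intro x k
  have hshift : ip d (x + fun j => 2 * π * k j) m = ip d x m + (k ⬝ᵥ m : ℤ) * (2 * π) := by
    simp only [ip, dotProduct, Pi.add_apply, add_mul, Finset.sum_add_distrib, Int.cast_sum,
      Int.cast_mul, Finset.sum_mul]
    congr 1
    exact Finset.sum_congr rfl fun j _ => by ring
  simp only [hshift, Real.cos_add_int_mul_two_pi]

noncomputable def ipCLM (d : ℕ) (k : Fin d → ℤ) : (Fin d → ℝ) →L[ℝ] ℝ :=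
  ∑ i, (k i : ℝ) • ContinuousLinearMap.proj i

lemma ipCLM_single (d : ℕ) (k : Fin d → ℤ) (j : Fin d) : ipCLM d k (Pi.single j 1) = k j := by
  simp [ipCLM, Pi.single_apply]

lemma hasFDerivAt_ip (d : ℕ) (k : Fin d → ℤ) (x : Fin d → ℝ) :
    HasFDerivAt (fun y => ip d y k) (ipCLM d k) x := by
  have hlin : (fun y => ip d y k) = ipCLM d k := by
    ext y; simp [ip, ipCLM, mul_comm]
  rw [hlin]
  exact (ipCLM d k).hasFDerivAt

/-- `c_k = cosWave d k 0` and `s_k = cosWave d k (-(π / 2))`: the phase lets cosines and sines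
be treated as one family. -/
noncomputable def cosWave (d : ℕ) (k : Fin d → ℤ) (a : ℝ) : (Fin d → ℝ) → ℝ :=
  fun x => Real.cos (ip d x k + a)

lemma cmap_eq_cosWave (d : ℕ) (k : Fin d → ℤ) : cmap d k = cosWave d k 0 := by
  ext x; simp [cmap, cosWave]

lemma smap_eq_cosWave (d : ℕ) (k : Fin d → ℤ) : smap d k = cosWave d k (-(π / 2)) := by
  ext x; simp [smap, cosWave, ← sub_eq_add_neg, Real.cos_sub_pi_div_two]

lemma hasFDerivAt_cosWave (d : ℕ) (k : Fin d → ℤ) (a : ℝ) (x : Fin d → ℝ) :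
    HasFDerivAt (cosWave d k a) (-Real.sin (ip d x k + a) • ipCLM d k) x :=
  ((hasFDerivAt_ip d k x).add_const a).cos

lemma differentiable_cosWave (d : ℕ) (k : Fin d → ℤ) (a : ℝ) :
    Differentiable ℝ (cosWave d k a) :=
  fun x => (hasFDerivAt_cosWave d k a x).differentiableAt

lemma fderiv_cosWave_single (d : ℕ) (k : Fin d → ℤ) (a : ℝ) (x : Fin d → ℝ) (j : Fin d) :
    fderiv ℝ (cosWave d k a) x (Pi.single j 1) = -Real.sin (ip d x k + a) * k j := by
  simp [(hasFDerivAt_cosWave d k a x).fderiv, ipCLM_single]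

noncomputable def gradInner (d : ℕ) (φ ψ : (Fin d → ℝ) → ℝ) : (Fin d → ℝ) → ℝ :=
  fun x => ∑ j, fderiv ℝ φ x (Pi.single j 1) * fderiv ℝ ψ x (Pi.single j 1)

section gradInner

variable {d : ℕ}

lemma Bop_eq_gradInner (φ : (Fin d → ℝ) → ℝ) : Bop d φ = gradInner d φ φ := by
  ext x; simp [Bop, gradInner, sq]

lemma gradInner_comm (φ ψ : (Fin d → ℝ) → ℝ) : gradInner d φ ψ = gradInner d ψ φ := by
  ext x; simp [gradInner, mul_comm]

lemma gradInner_zero_left (ψ : (Fin d → ℝ) → ℝ) : gradInner d 0 ψ = 0 := by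
  ext x; simp [gradInner]

lemma gradInner_add_left {φ₁ φ₂ : (Fin d → ℝ) → ℝ} (h₁ : Differentiable ℝ φ₁)
    (h₂ : Differentiable ℝ φ₂) (ψ : (Fin d → ℝ) → ℝ) :
    gradInner d (φ₁ + φ₂) ψ = gradInner d φ₁ ψ + gradInner d φ₂ ψ := by
  ext x; simp [gradInner, fderiv_add (h₁ x) (h₂ x), add_mul, Finset.sum_add_distrib]

lemma gradInner_smul_left {φ : (Fin d → ℝ) → ℝ} (h : Differentiable ℝ φ) (c : ℝ)
    (ψ : (Fin d → ℝ) → ℝ) : gradInner d (c • φ) ψ = c • gradInner d φ ψ := by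
  ext x; simp [gradInner, fderiv_const_smul (h x), Finset.mul_sum, mul_assoc]

lemma differentiable_of_mem_span {S : Set ((Fin d → ℝ) → ℝ)}
    (hS : ∀ f ∈ S, Differentiable ℝ f) {φ : (Fin d → ℝ) → ℝ} (hφ : φ ∈ Submodule.span ℝ S) :
    Differentiable ℝ φ := by
  induction hφ using Submodule.span_induction with
  | mem f hf => exact hS f hf
  | zero => exact differentiable_const 0
  | add _ _ _ _ h₁ h₂ => exact h₁.add h₂
  | smul c _ _ h => exact h.const_smul c

lemma gradInner_mem_span {S : Set ((Fin d → ℝ) → ℝ)} (hS : ∀ f ∈ S, Differentiable ℝ f)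
    (hSS : ∀ f ∈ S, ∀ g ∈ S, gradInner d f g ∈ Submodule.span ℝ S) {φ ψ : (Fin d → ℝ) → ℝ}
    (hφ : φ ∈ Submodule.span ℝ S) (hψ : ψ ∈ Submodule.span ℝ S) :
    gradInner d φ ψ ∈ Submodule.span ℝ S := by
  have hdiff := fun f (hf : f ∈ Submodule.span ℝ S) => differentiable_of_mem_span hS hf
  induction hφ, hψ using Submodule.span_induction₂ with
  | mem_mem f g hf hg => exact hSS f hf g hg
  | zero_left g _ => simp [gradInner_zero_left]
  | zero_right f _ => simp [gradInner_comm f, gradInner_zero_left]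
  | add_left f₁ f₂ g h₁ h₂ _ ih₁ ih₂ =>
    rw [gradInner_add_left (hdiff _ h₁) (hdiff _ h₂)]
    exact add_mem ih₁ ih₂
  | add_right f g₁ g₂ _ h₁ h₂ ih₁ ih₂ =>
    rw [gradInner_comm, gradInner_add_left (hdiff _ h₁) (hdiff _ h₂), gradInner_comm g₁,
      gradInner_comm g₂]
    exact add_mem ih₁ ih₂
  | smul_left c f g hf _ ih =>
    rw [gradInner_smul_left (hdiff _ hf)]
    exact Submodule.smul_mem _ c ih
  | smul_right c f g _ hg ih =>
    rw [gradInner_comm, gradInner_smul_left (hdiff _ hg), gradInner_comm g]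
    exact Submodule.smul_mem _ c ih

end gradInner

section trigSpan

variable {d : ℕ}

lemma gradInner_cosWave (k l : Fin d → ℤ) (a b : ℝ) :
    gradInner d (cosWave d k a) (cosWave d l b) =
      ((ipZ d k l : ℝ) / 2) • (cosWave d (k - l) (a - b) - cosWave d (k + l) (a + b)) := by
  ext x
  have hprod : Real.sin (ip d x k + a) * Real.sin (ip d x l + b) =
      (cosWave d (k - l) (a - b) x - cosWave d (k + l) (a + b) x) / 2 := by
    simp only [cosWave, ip_sub_right, ip_add_right,
      show ∀ u v w z : ℝ, u - v + (w - z) = (u + w) - (v + z) by intros; ring,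
      show ∀ u v w z : ℝ, u + v + (w + z) = (u + w) + (v + z) by intros; ring,
      Real.cos_sub, Real.cos_add]
    ring
  simp only [gradInner, fderiv_cosWave_single, Pi.smul_apply, Pi.sub_apply, smul_eq_mul]
  rw [div_mul_eq_mul_div, mul_div_assoc, ← hprod, ipZ, Int.cast_sum, Finset.sum_mul]
  refine Finset.sum_congr rfl fun j _ => ?_
  push_cast
  ring

noncomputable def trigSpan (d : ℕ) (M : Set (Fin d → ℤ)) : Submodule ℝ ((Fin d → ℝ) → ℝ) :=
  Submodule.span ℝ (Set.image2 (cosWave d) M Set.univ)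

lemma cosWave_mem_trigSpan {M : Set (Fin d → ℤ)} {k : Fin d → ℤ} (hk : k ∈ M) (a : ℝ) :
    cosWave d k a ∈ trigSpan d M :=
  Submodule.subset_span (Set.mem_image2_of_mem hk (Set.mem_univ a))

lemma differentiable_of_mem_image2_cosWave {M : Set (Fin d → ℤ)} :
    ∀ f ∈ Set.image2 (cosWave d) M Set.univ, Differentiable ℝ f := by
  rintro _ ⟨k, -, a, -, rfl⟩
  exact differentiable_cosWave d k a

lemma differentiable_of_mem_trigSpan {M : Set (Fin d → ℤ)} {φ : (Fin d → ℝ) → ℝ}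
    (hφ : φ ∈ trigSpan d M) : Differentiable ℝ φ :=
  differentiable_of_mem_span differentiable_of_mem_image2_cosWave hφ

lemma gradInner_mem_trigSpan {M : Set (Fin d → ℤ)}
    (hM : ∀ k ∈ M, ∀ l ∈ M, ipZ d k l ≠ 0 → k + l ∈ M ∧ k - l ∈ M)
    {φ ψ : (Fin d → ℝ) → ℝ} (hφ : φ ∈ trigSpan d M) (hψ : ψ ∈ trigSpan d M) :
    gradInner d φ ψ ∈ trigSpan d M := by
  refine gradInner_mem_span differentiable_of_mem_image2_cosWave ?_ hφ hψ
  rintro _ ⟨k, hk, a, -, rfl⟩ _ ⟨l, hl, b, -, rfl⟩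
  rw [gradInner_cosWave]
  by_cases h : ipZ d k l = 0
  · simp [h]
  · obtain ⟨hadd, hsub⟩ := hM k hk l hl h
    exact Submodule.smul_mem _ _
      (sub_mem (cosWave_mem_trigSpan hsub _) (cosWave_mem_trigSpan hadd _))

lemma H0_subset_trigSpan {I : Finset (Fin d → ℤ)} {M : Set (Fin d → ℤ)} (h0 : 0 ∈ M)
    (hI : ↑I ⊆ M) : H0 d I ⊆ trigSpan d M := by
  refine Submodule.span_le.mpr ?_
  rintro f (rfl | hf)
  · have hone : (fun _ => (1 : ℝ)) = cosWave d 0 0 := by ext x; simp [cosWave, ip]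
    rw [SetLike.mem_coe, hone]
    exact cosWave_mem_trigSpan h0 0
  · simp only [Set.mem_iUnion, Set.mem_insert_iff, Set.mem_singleton_iff] at hf
    obtain ⟨k, hk, rfl | rfl⟩ := hf
    · rw [cmap_eq_cosWave]; exact cosWave_mem_trigSpan (hI hk) _
    · rw [smap_eq_cosWave]; exact cosWave_mem_trigSpan (hI hk) _

end trigSpan

section Hinf

variable {d : ℕ}

lemma BRep_subset {V : Submodule ℝ ((Fin d → ℝ) → ℝ)} (hV : ∀ θ ∈ V, Bop d θ ∈ V)
    {H : Set ((Fin d → ℝ) → ℝ)} (hH : H ⊆ V) : BRep d H ⊆ V := by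
  rintro _ ⟨n, -, θ₀, hθ₀, θ, hθ, rfl⟩
  exact sub_mem (hH hθ₀) (sum_mem fun j _ => hV _ (hH (hθ j)))

lemma Hinf_subset {I : Finset (Fin d → ℤ)} {V : Submodule ℝ ((Fin d → ℝ) → ℝ)}
    (hV : ∀ θ ∈ V, Bop d θ ∈ V) (h0 : H0 d I ⊆ V) : Hinf d I ⊆ V := by
  have hseq : ∀ j, HSeq d I j ⊆ V := by
    intro j
    induction j with
    | zero => exact h0
    | succ j ih => exact fun f hf => BRep_subset hV ih hf.1
  exact Set.iUnion_subset hseq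

lemma Hinf_subset_trigSpan {I : Finset (Fin d → ℤ)} {M : Set (Fin d → ℤ)}
    (hM : ∀ k ∈ M, ∀ l ∈ M, ipZ d k l ≠ 0 → k + l ∈ M ∧ k - l ∈ M) (h0 : 0 ∈ M)
    (hI : ↑I ⊆ M) : Hinf d I ⊆ trigSpan d M :=
  Hinf_subset (fun θ hθ => Bop_eq_gradInner θ ▸ gradInner_mem_trigSpan hM hθ hθ)
    (H0_subset_trigSpan h0 hI)

end Hinf

noncomputable def cube (d : ℕ) : Set (Fin d → ℝ) := Set.Icc 0 fun _ => 2 * π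

section Integrals

variable {d : ℕ}

lemma integrableOn_cube {E : Type*} [NormedAddCommGroup E] {f : (Fin d → ℝ) → E}
    (hf : Continuous f) : IntegrableOn f (cube d) :=
  hf.continuousOn.integrableOn_compact isCompact_Icc

lemma measureReal_cube : volume.real (cube d) = (2 * π) ^ d := by
  rw [measureReal_def, cube, Real.volume_Icc_pi_toReal fun _ => by positivity]
  simp

lemma integral_cube_prod (f : Fin d → ℝ → ℂ) :
    ∫ x in cube d, ∏ j, f j (x j) = ∏ j, ∫ t in Set.Icc 0 (2 * π), f j t := by
  rw [cube, ← Set.pi_univ_Icc, volume_pi, Measure.restrict_pi_pi]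
  exact integral_fintype_prod_eq_prod f

lemma integral_Icc_cexp_int_mul_I {n : ℤ} (hn : n ≠ 0) :
    ∫ t in Set.Icc 0 (2 * π), Complex.exp (n * t * Complex.I) = 0 := by
  have hc : (n : ℂ) * Complex.I ≠ 0 := by simp [hn]
  rw [integral_Icc_eq_integral_Ioc, ← intervalIntegral.integral_of_le (by positivity)]
  simp_rw [mul_right_comm _ _ Complex.I]
  have hperiod : (n : ℂ) * Complex.I * (2 * π : ℝ) = n * (2 * π * Complex.I) := by
    push_cast; ring
  rw [integral_exp_mul_complex hc, hperiod, Complex.exp_int_mul_two_pi_mul_I]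
  simp

lemma integral_cube_cexp_ip {n : Fin d → ℤ} (hn : n ≠ 0) :
    ∫ x in cube d, Complex.exp (ip d x n * Complex.I) = 0 := by
  obtain ⟨j, hj⟩ := Function.ne_iff.mp hn
  have hprod : (fun x => Complex.exp (ip d x n * Complex.I)) =
      fun x => ∏ i, Complex.exp (n i * x i * Complex.I) := by
    ext x
    rw [← Complex.exp_sum]
    push_cast [ip, Finset.sum_mul]
    simp_rw [mul_comm (n _ : ℂ)]
  rw [hprod, integral_cube_prod fun i t => Complex.exp (n i * t * Complex.I)]
  exact Finset.prod_eq_zero (Finset.mem_univ j) (integral_Icc_cexp_int_mul_I hj)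

lemma integral_cube_cosWave {n : Fin d → ℤ} (hn : n ≠ 0) (a : ℝ) :
    ∫ x in cube d, cosWave d n a x = 0 := by
  have hre : ∀ x, cosWave d n a x =
      RCLike.re (Complex.exp (a * Complex.I) * Complex.exp (ip d x n * Complex.I)) := by
    intro x
    rw [← Complex.exp_add, ← add_mul, add_comm, ← Complex.ofReal_add, RCLike.re_to_complex,
      Complex.exp_ofReal_mul_I_re, cosWave]
  have hint : IntegrableOn (fun x => Complex.exp (ip d x n * Complex.I)) (cube d) :=
    integrableOn_cube (by fun_prop)
  simp_rw [hre]
  rw [integral_re (hint.const_mul _), integral_const_mul, integral_cube_cexp_ip hn, mul_zero,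
    map_zero]

lemma integral_cube_cosWave_mul_cos {k m : Fin d → ℤ} (hsub : k - m ≠ 0) (hadd : k + m ≠ 0)
    (a : ℝ) : ∫ x in cube d, cosWave d k a x * Real.cos (ip d x m) = 0 := by
  have hsum : ∀ x, cosWave d k a x * Real.cos (ip d x m) =
      cosWave d (k - m) a x / 2 + cosWave d (k + m) a x / 2 := by
    intro x
    simp only [cosWave, ip_sub_right, ip_add_right,
      show ∀ u v w : ℝ, u - v + w = (u + w) - v by intros; ring,
      show ∀ u v w : ℝ, u + v + w = (u + w) + v by intros; ring, Real.cos_sub, Real.cos_add]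
    ring
  have hint : ∀ n, IntegrableOn (fun x => cosWave d n a x / 2) (cube d) :=
    fun n => (integrableOn_cube (differentiable_cosWave d n a).continuous).div_const 2
  simp_rw [hsum]
  rw [integral_add (hint _) (hint _), integral_div, integral_div, integral_cube_cosWave hsub,
    integral_cube_cosWave hadd]
  simp

lemma integral_cube_mul_cos_eq_zero {M : Set (Fin d → ℤ)} {m : Fin d → ℤ} (hm : m ∉ M)
    (hm' : -m ∉ M) {g : (Fin d → ℝ) → ℝ} (hg : g ∈ trigSpan d M) :
    ∫ x in cube d, g x * Real.cos (ip d x m) = 0 := by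
  have hint : ∀ f ∈ trigSpan d M, IntegrableOn (fun x => f x * Real.cos (ip d x m)) (cube d) :=
    fun f hf => integrableOn_cube ((differentiable_of_mem_trigSpan hf).continuous.mul
      (by fun_prop))
  induction hg using Submodule.span_induction with
  | mem f hf =>
    obtain ⟨k, hk, a, -, rfl⟩ := hf
    refine integral_cube_cosWave_mul_cos (sub_ne_zero.mpr (ne_of_mem_of_not_mem hk hm)) ?_ a
    rintro hkm
    exact hm' (eq_neg_of_add_eq_zero_left hkm ▸ hk)
  | zero => simp
  | add f₁ f₂ h₁ h₂ ih₁ ih₂ =>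
    simp only [Pi.add_apply, add_mul]
    rw [integral_add (hint _ h₁) (hint _ h₂), ih₁, ih₂, add_zero]
  | smul c f _ ih =>
    simp only [Pi.smul_apply, smul_eq_mul, mul_assoc]
    rw [integral_const_mul, ih, mul_zero]

lemma integral_cube_cos_mul_self {m : Fin d → ℤ} (hm : m ≠ 0) :
    ∫ x in cube d, Real.cos (ip d x m) * Real.cos (ip d x m) = (2 * π) ^ d / 2 := by
  have hm2 : m + m ≠ 0 := by rw [← two_smul ℤ]; exact smul_ne_zero two_ne_zero hm
  have hsq : ∀ x,
      Real.cos (ip d x m) * Real.cos (ip d x m) = (1 + cosWave d (m + m) 0 x) / 2 := by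
    intro x
    rw [cosWave, ip_add_right, add_zero, Real.cos_add]
    linear_combination (1 / 2) * Real.sin_sq_add_cos_sq (ip d x m)
  simp_rw [hsq]
  rw [integral_div, integral_add (integrableOn_cube continuous_const)
    (integrableOn_cube (differentiable_cosWave d _ 0).continuous), integral_cube_cosWave hm2,
    setIntegral_const, measureReal_cube]
  simp

lemma exists_le_abs_cos_sub {m : Fin d → ℤ} (hm : m ≠ 0) {g : (Fin d → ℝ) → ℝ}
    (hg : Continuous g) (horth : ∫ x in cube d, g x * Real.cos (ip d x m) = 0) :
    ∃ x, 1 / 4 ≤ |Real.cos (ip d x m) - g x| := by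
  by_contra! hclose
  have hval : ∫ x in cube d, (Real.cos (ip d x m) - g x) * Real.cos (ip d x m) =
      (2 * π) ^ d / 2 := by
    simp only [sub_mul]
    rw [integral_sub (integrableOn_cube (by fun_prop)) (integrableOn_cube (by fun_prop)),
      integral_cube_cos_mul_self hm, horth, sub_zero]
  have hbound : ‖∫ x in cube d, (Real.cos (ip d x m) - g x) * Real.cos (ip d x m)‖ ≤
      1 / 4 * (2 * π) ^ d := by
    rw [← measureReal_cube]
    refine norm_setIntegral_le_of_norm_le_const isCompact_Icc.measure_lt_top fun x _ => ?_
    rw [norm_mul, Real.norm_eq_abs, Real.norm_eq_abs]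
    calc |Real.cos (ip d x m) - g x| * |Real.cos (ip d x m)| ≤ 1 / 4 * 1 :=
          mul_le_mul (hclose x).le (Real.abs_cos_le_one _) (abs_nonneg _) (by norm_num)
      _ = 1 / 4 := mul_one _
  rw [hval, Real.norm_of_nonneg (by positivity)] at hbound
  have : 0 < (2 * π) ^ d := by positivity
  linarith


end Integrals

section Frequencies

variable {n R : Type*} [Fintype n] [CommRing R]

lemma dotProduct_eq_zero_of_mem_closure {S T : Set (n → R)}
    (h : ∀ k ∈ S, ∀ l ∈ T, k ⬝ᵥ l = 0) {k l : n → R} (hk : k ∈ AddSubgroup.closure S)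
    (hl : l ∈ AddSubgroup.closure T) : k ⬝ᵥ l = 0 := by
  induction hk using AddSubgroup.closure_induction with
  | mem k hk =>
    induction hl using AddSubgroup.closure_induction with
    | mem l hl => exact h k hk l hl
    | zero => simp
    | add _ _ _ _ h₁ h₂ => simp [dotProduct_add, h₁, h₂]
    | neg _ _ h => simp [h]
  | zero => simp
  | add _ _ _ _ h₁ h₂ => simp [add_dotProduct, h₁, h₂]
  | neg _ _ h => simp [h]

variable {G₁ G₂ : AddSubgroup (n → R)}

lemma add_mem_union_of_dotProduct_ne_zero (horth : ∀ k ∈ G₁, ∀ l ∈ G₂, k ⬝ᵥ l = 0)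
    {k l : n → R} (hk : k ∈ (G₁ ∪ G₂ : Set (n → R))) (hl : l ∈ (G₁ ∪ G₂ : Set (n → R)))
    (hkl : k ⬝ᵥ l ≠ 0) :
    k + l ∈ (G₁ ∪ G₂ : Set (n → R)) ∧ k - l ∈ (G₁ ∪ G₂ : Set (n → R)) := by
  rcases hk with hk | hk <;> rcases hl with hl | hl
  · exact ⟨Or.inl (add_mem hk hl), Or.inl (sub_mem hk hl)⟩
  · exact absurd (horth k hk l hl) hkl
  · exact absurd (dotProduct_comm k l ▸ horth l hl k hk) hkl
  · exact ⟨Or.inr (add_mem hk hl), Or.inr (sub_mem hk hl)⟩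

lemma add_notMem_union [LinearOrder R] [IsStrictOrderedRing R]
    (horth : ∀ k ∈ G₁, ∀ l ∈ G₂, k ⬝ᵥ l = 0) {m₁ m₂ : n → R} (h₁ : m₁ ∈ G₁) (h₂ : m₂ ∈ G₂)
    (h₁₀ : m₁ ≠ 0) (h₂₀ : m₂ ≠ 0) : m₁ + m₂ ∉ (G₁ ∪ G₂ : Set (n → R)) := by
  rintro (h | h)
  · have : m₂ ∈ G₁ := by simpa using sub_mem h h₁
    exact h₂₀ (dotProduct_self_eq_zero.mp (horth m₂ this m₂ h₂))
  · have : m₁ ∈ G₂ := by simpa using sub_mem h h₂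
    exact h₁₀ (dotProduct_self_eq_zero.mp (horth m₁ h₁ m₁ this))

end Frequencies

theorem stmt13_general (d : ℕ) (I I₁ I₂ : Finset (Fin d → ℤ))
    (hI : ∀ k ∈ I, k ≠ 0)
    (hunion : I = I₁ ∪ I₂)
    (horth : ∀ k₁ ∈ I₁, ∀ k₂ ∈ I₂, ipZ d k₁ k₂ = 0)
    (m₁ : Fin d → ℤ) (hm₁ : m₁ ∈ I₁) (m₂ : Fin d → ℤ) (hm₂ : m₂ ∈ I₂) :
    (∀ g ∈ Hinf d I,
      (∫ x in Set.Icc (0 : Fin d → ℝ) (fun _ => 2 * Real.pi),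
        g x * Real.cos (ip d x (m₁ + m₂))) = 0) ∧
    ¬ (∀ f : (Fin d → ℝ) → ℝ, Continuous f → Periodic2pi d f →
        ∀ ε : ℝ, 0 < ε → ∃ g ∈ Hinf d I, ∀ x : Fin d → ℝ, |f x - g x| < ε) := by
  set G₁ := AddSubgroup.closure (I₁ : Set (Fin d → ℤ))
  set G₂ := AddSubgroup.closure (I₂ : Set (Fin d → ℤ))
  have horthG : ∀ k ∈ G₁, ∀ l ∈ G₂, k ⬝ᵥ l = 0 := fun k hk l hl =>
    dotProduct_eq_zero_of_mem_closure horth hk hl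
  have hI₁ : (I₁ : Set (Fin d → ℤ)) ⊆ G₁ := AddSubgroup.subset_closure
  have hI₂ : (I₂ : Set (Fin d → ℤ)) ⊆ G₂ := AddSubgroup.subset_closure
  have hsub : Hinf d I ⊆ trigSpan d (G₁ ∪ G₂) :=
    Hinf_subset_trigSpan (fun k hk l hl => add_mem_union_of_dotProduct_ne_zero horthG hk hl)
      (Or.inl G₁.zero_mem) (hunion ▸ Finset.coe_union I₁ I₂ ▸ Set.union_subset_union hI₁ hI₂)
  have hm₁₀ : m₁ ≠ 0 := hI m₁ (hunion ▸ Finset.mem_union_left _ hm₁)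
  have hm₂₀ : m₂ ≠ 0 := hI m₂ (hunion ▸ Finset.mem_union_right _ hm₂)
  have hm := add_notMem_union horthG (hI₁ hm₁) (hI₂ hm₂) hm₁₀ hm₂₀
  have hm' : -(m₁ + m₂) ∉ (G₁ ∪ G₂ : Set _) := neg_add m₁ m₂ ▸
    add_notMem_union horthG (neg_mem (hI₁ hm₁)) (neg_mem (hI₂ hm₂)) (neg_ne_zero.mpr hm₁₀)
      (neg_ne_zero.mpr hm₂₀)
  have horthH : ∀ g ∈ Hinf d I, ∫ x in cube d, g x * Real.cos (ip d x (m₁ + m₂)) = 0 :=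
    fun g hg => integral_cube_mul_cos_eq_zero hm hm' (hsub hg)
  refine ⟨horthH, fun hdense => ?_⟩
  obtain ⟨g, hg, hclose⟩ := hdense (fun x => Real.cos (ip d x (m₁ + m₂))) (by fun_prop)
    (periodic2pi_cos_ip d _) (1 / 4) (by norm_num)
  obtain ⟨x, hx⟩ := exists_le_abs_cos_sub (ne_of_mem_of_not_mem (Or.inl G₁.zero_mem) hm).symm
    (differentiable_of_mem_trigSpan (hsub hg)).continuous (horthH g hg)
  exact (hclose x).not_ge hx

/-- if I = I₁ ∪ I₂ with I₁, I₂ nonempty and mutually orthogonal,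
then for any m₁ ∈ I₁, m₂ ∈ I₂, every g ∈ H_∞(I) is orthogonal to
cos⟨·, m₁+m₂⟩ on [0,2π]^d; in particular H_∞(I) is not uniformly dense in the
continuous (2πℤ^d)-periodic functions. -/
theorem stmt13 (d : ℕ) (hd : 1 ≤ d) (I I₁ I₂ : Finset (Fin d → ℤ))
    (hI : ∀ k ∈ I, k ≠ 0)
    (hI1 : I₁.Nonempty) (hI2 : I₂.Nonempty) (hunion : I = I₁ ∪ I₂)
    (horth : ∀ k₁ ∈ I₁, ∀ k₂ ∈ I₂, ipZ d k₁ k₂ = 0)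
    (m₁ : Fin d → ℤ) (hm₁ : m₁ ∈ I₁) (m₂ : Fin d → ℤ) (hm₂ : m₂ ∈ I₂) :
    (∀ g ∈ Hinf d I,
      (∫ x in Set.Icc (0 : Fin d → ℝ) (fun _ => 2 * Real.pi),
        g x * Real.cos (ip d x (m₁ + m₂))) = 0) ∧
    ¬ (∀ f : (Fin d → ℝ) → ℝ, Continuous f → Periodic2pi d f →
        ∀ ε : ℝ, 0 < ε → ∃ g ∈ Hinf d I, ∀ x : Fin d → ℝ, |f x - g x| < ε) :=
  stmt13_general d I I₁ I₂ hI hunion horth m₁ hm₁ m₂ hm₂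
end

section
/- Let d ≥ 1, let ψ₀ : ℝ^d → ℂ be a continuously differentiable (2πℤ^d)-periodic function which is not identically zero, and let M > 0. Then there exists a smooth (2πℤ^d)-periodic function θ : ℝ^d → ℝ such that ∫_{[0,2π]^d} Σ_{j=1}^d |∂_{x_j}(e^{iθ}ψ₀)(x)|² dx > M. In particular, multiplication by a unimodular factor e^{iθ} can make the H¹-norm of ψ₀ arbitrarily large. -/
open MeasureTheory Real Set

lemma aux_fderiv {d : ℕ} (ψ₀ : (Fin d → ℝ) → ℂ) (hψ : Differentiable ℝ ψ₀)
    (lam c : ℝ) (j₀ : Fin d) (x : Fin d → ℝ) :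
    fderiv ℝ (fun y => Complex.exp (Complex.I * ((lam * Real.sin (y j₀ - c) : ℝ) : ℂ)) * ψ₀ y) x
      (Pi.single j₀ 1)
    = Complex.exp (Complex.I * ((lam * Real.sin (x j₀ - c) : ℝ) : ℂ)) *
      (fderiv ℝ ψ₀ x (Pi.single j₀ 1) +
        Complex.I * ((lam * Real.cos (x j₀ - c) : ℝ) : ℂ) * ψ₀ x) := by
  have hproj : HasFDerivAt (fun y : Fin d → ℝ => y j₀)
      (ContinuousLinearMap.proj j₀ : (Fin d → ℝ) →L[ℝ] ℝ) x :=
    hasFDerivAt_apply j₀ x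
  have h1 : HasDerivAt (fun t : ℝ => lam * Real.sin (t - c))
      (lam * Real.cos (x j₀ - c)) (x j₀) := by
    have := ((Real.hasDerivAt_sin (x j₀ - c)).comp (x j₀)
      ((hasDerivAt_id (x j₀)).sub_const c)).const_mul lam
    simpa using this
  have hθ : HasFDerivAt (fun y : Fin d → ℝ => lam * Real.sin (y j₀ - c))
      ((lam * Real.cos (x j₀ - c)) • (ContinuousLinearMap.proj j₀ : (Fin d → ℝ) →L[ℝ] ℝ)) x :=
    by have := h1.comp_hasFDerivAt x hproj; exact this
  have hθC : HasFDerivAt (fun y : Fin d → ℝ => ((lam * Real.sin (y j₀ - c) : ℝ) : ℂ))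
      (Complex.ofRealCLM.comp ((lam * Real.cos (x j₀ - c)) •
        (ContinuousLinearMap.proj j₀ : (Fin d → ℝ) →L[ℝ] ℝ))) x :=
    Complex.ofRealCLM.hasFDerivAt.comp x hθ
  have hIθ : HasFDerivAt (fun y : Fin d → ℝ => Complex.I * ((lam * Real.sin (y j₀ - c) : ℝ) : ℂ))
      (Complex.I • (Complex.ofRealCLM.comp ((lam * Real.cos (x j₀ - c)) •
        (ContinuousLinearMap.proj j₀ : (Fin d → ℝ) →L[ℝ] ℝ)))) x :=
    hθC.const_mul Complex.I
  have hexp := hIθ.cexp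
  have hF := hexp.mul (hψ x).hasFDerivAt
  rw [show (fun y => Complex.exp (Complex.I * ((lam * Real.sin (y j₀ - c) : ℝ) : ℂ)) * ψ₀ y) = (fun y => Complex.exp (Complex.I * ((lam * Real.sin (y j₀ - c) : ℝ) : ℂ))) * ψ₀ from rfl, hF.fderiv]
  simp [Pi.single_eq_same]
  ring

lemma norm_exp_I_mul (r : ℝ) : ‖Complex.exp (Complex.I * (r : ℂ))‖ = 1 := by
  rw [Complex.norm_exp]
  simp

/-- (2πℤ^d)-periodicity for complex-valued functions. -/
def Periodic2piC (d : ℕ) (f : (Fin d → ℝ) → ℂ) : Prop :=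
  ∀ (x : Fin d → ℝ) (k : Fin d → ℤ), f (x + fun j => 2 * Real.pi * (k j : ℝ)) = f x

/-- for a C¹ periodic ψ₀ ≢ 0 and any M > 0 there is a smooth
periodic real phase θ with ∫_{[0,2π]^d} Σ_j |∂_{x_j}(e^{iθ}ψ₀)|² > M. -/
theorem stmt16 (d : ℕ) (hd : 1 ≤ d) (ψ₀ : (Fin d → ℝ) → ℂ)
    (hψ : ContDiff ℝ 1 ψ₀) (hper : Periodic2piC d ψ₀) (hne : ψ₀ ≠ 0)
    (M : ℝ) (hM : 0 < M) :
    ∃ θ : (Fin d → ℝ) → ℝ, ContDiff ℝ (⊤ : ℕ∞) θ ∧ Periodic2pi d θ ∧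
      M < ∫ x in Set.Icc (0 : Fin d → ℝ) (fun _ => 2 * Real.pi),
        ∑ j, ‖fderiv ℝ (fun y => Complex.exp (Complex.I * (θ y : ℂ)) * ψ₀ y) x
              (Pi.single j 1)‖ ^ 2 := by
  have h2π : (0:ℝ) < 2 * π := by positivity
  -- a point in [0,2π)^d where ψ₀ ≠ 0
  obtain ⟨x₀, hx₀⟩ : ∃ x, ψ₀ x ≠ 0 := by
    by_contra h; push_neg at h; exact hne (funext h)
  set k : Fin d → ℤ := fun j => -⌊x₀ j / (2 * π)⌋ with hk
  set z : Fin d → ℝ := x₀ + fun j => 2 * π * (k j : ℝ) with hzdef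
  have hzψ : ψ₀ z = ψ₀ x₀ := hper x₀ k
  have hz0 : ∀ j, 0 ≤ z j ∧ z j < 2 * π := by
    intro j
    have ht : x₀ j / (2 * π) * (2 * π) = x₀ j := div_mul_cancel₀ _ (ne_of_gt h2π)
    have h1 : ((⌊x₀ j / (2 * π)⌋ : ℝ)) ≤ x₀ j / (2 * π) := Int.floor_le _
    have h2 : x₀ j / (2 * π) < (⌊x₀ j / (2 * π)⌋ : ℝ) + 1 := Int.lt_floor_add_one _
    have hzj : z j = x₀ j + 2 * π * (-(⌊x₀ j / (2 * π)⌋ : ℝ)) := by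
      simp [hzdef, hk]
    constructor
    · nlinarith
    · nlinarith
  have j₀ : Fin d := ⟨0, hd⟩
  set c : ℝ := z j₀ with hc
  -- positivity point
  set r : ℝ := ‖ψ₀ z‖ with hr
  have hrpos : 0 < r := by
    rw [hr, norm_pos_iff]; rw [hzψ]; exact hx₀
  -- the continuous function cos(x j₀ - c) * ‖ψ₀ x‖ is > r/2 near z
  set g : (Fin d → ℝ) → ℝ := fun y => Real.cos (y j₀ - c) * ‖ψ₀ y‖ with hg
  have hgcont : Continuous g := by
    exact (Real.continuous_cos.comp ((continuous_apply j₀).sub continuous_const)).mul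
      hψ.continuous.norm
  have hgz : g z = r := by simp [hg, hc, hr]
  have hmem : g ⁻¹' (Ioi (r/2)) ∈ nhds z := by
    apply hgcont.continuousAt.preimage_mem_nhds
    apply Ioi_mem_nhds
    rw [hgz]; linarith
  obtain ⟨ε, hε, hball⟩ := Metric.mem_nhds_iff.mp hmem
  -- the small box
  have hnemp : (Finset.univ : Finset (Fin d)).Nonempty := ⟨j₀, Finset.mem_univ _⟩
  set η : ℝ := Finset.univ.inf' hnemp (fun j => 2 * π - z j) with hη
  have hηpos : 0 < η := by
    rw [hη, Finset.lt_inf'_iff]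
    intro j _
    linarith [(hz0 j).2]
  set δ : ℝ := min (ε/2) η with hδdef
  have hδ : 0 < δ := lt_min (by linarith) hηpos
  have hδε : δ < ε := lt_of_le_of_lt (min_le_left _ _) (by linarith)
  have hδj : ∀ j, z j + δ ≤ 2 * π := by
    intro j
    have : η ≤ 2 * π - z j := Finset.inf'_le _ (Finset.mem_univ j)
    have : δ ≤ 2 * π - z j := le_trans (min_le_right _ _) this
    linarith
  set B : Set (Fin d → ℝ) := Icc z (z + fun _ => δ) with hB
  have hzle : z ≤ z + fun _ => δ := by
    intro j; simp [Pi.add_apply]; linarith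
  have hBIcc : B ⊆ Icc (0 : Fin d → ℝ) (fun _ => 2 * π) := by
    intro y hy
    obtain ⟨hy1, hy2⟩ := hy
    constructor
    · intro j; exact le_trans (hz0 j).1 (hy1 j)
    · intro j
      have := hy2 j
      simp only [Pi.add_apply] at this
      exact le_trans this (hδj j)
  have hBball : B ⊆ Metric.ball z ε := by
    intro y hy
    obtain ⟨hy1, hy2⟩ := hy
    rw [Metric.mem_ball]
    rw [dist_pi_lt_iff hε]
    intro j
    have h1 := hy1 j
    have h2 := hy2 j
    simp only [Pi.add_apply] at h2
    rw [Real.dist_eq, abs_sub_lt_iff]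
    constructor <;> linarith
  have hBvol : (volume B).toReal = δ ^ d := by
    rw [hB, Real.volume_Icc_pi_toReal hzle]
    simp [Finset.prod_const]
  have hBfin : volume B ≠ ⊤ := (isCompact_Icc.measure_lt_top).ne
  have hmpos : (0:ℝ) < δ ^ d := pow_pos hδ d
  -- bound on the derivative of ψ₀
  have hψd : Differentiable ℝ ψ₀ := hψ.differentiable one_ne_zero
  have hbcont : Continuous fun x => fderiv ℝ ψ₀ x (Pi.single j₀ 1) :=
    (ContinuousLinearMap.apply ℝ ℂ (Pi.single j₀ 1)).continuous.comp
      (hψ.continuous_fderiv one_ne_zero)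
  obtain ⟨C, hC⟩ := (isCompact_Icc (a := (0 : Fin d → ℝ)) (b := fun _ => 2 * π)
    ).exists_bound_of_continuousOn hbcont.continuousOn
  set C' : ℝ := max C 0 with hC'
  have hC'0 : 0 ≤ C' := le_max_right _ _
  have hC'b : ∀ x ∈ Icc (0 : Fin d → ℝ) (fun _ => 2 * π),
      ‖fderiv ℝ ψ₀ x (Pi.single j₀ 1)‖ ≤ C' := fun x hx =>
    le_trans (hC x hx) (le_max_left _ _)
  -- choice of constants
  set K : ℝ := Real.sqrt (M / δ ^ d) + 1 with hK
  have hKpos : 0 < K := by positivity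
  have hKM : M < K ^ 2 * δ ^ d := by
    rw [hK]
    set s : ℝ := Real.sqrt (M / δ ^ d) with hs
    have h1 : s ^ 2 = M / δ ^ d := Real.sq_sqrt (by positivity)
    have h2 : M / δ ^ d * δ ^ d = M := div_mul_cancel₀ _ (ne_of_gt hmpos)
    have h0 : 0 ≤ s := Real.sqrt_nonneg _
    calc M = M / δ ^ d * δ ^ d := h2.symm
    _ < (M / δ ^ d + (2 * s + 1)) * δ ^ d := by
        apply mul_lt_mul_of_pos_right _ hmpos
        linarith
    _ = (s + 1) ^ 2 * δ ^ d := by rw [← h1]; ring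
  have ha₀ : (0:ℝ) < r / 2 := by linarith
  set lam : ℝ := (C' + K) / (r / 2) with hlam
  have hlampos : 0 < lam := by positivity
  have hlamkey : lam * (r / 2) = C' + K := div_mul_cancel₀ _ (ne_of_gt ha₀)
  refine ⟨fun y => lam * Real.sin (y j₀ - c), ?_, ?_, ?_⟩
  · exact contDiff_const.mul (Real.contDiff_sin.comp
      (((ContinuousLinearMap.proj j₀ : (Fin d → ℝ) →L[ℝ] ℝ).contDiff).sub contDiff_const))
  · intro x k'
    show lam * Real.sin ((x + fun j => 2 * π * (k' j : ℝ)) j₀ - c)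
      = lam * Real.sin (x j₀ - c)
    have h : (x + fun j => 2 * π * (k' j : ℝ)) j₀ - c = (x j₀ - c) + (k' j₀ : ℝ) * (2 * π) := by
      simp only [Pi.add_apply]; ring
    rw [h, Real.sin_add_int_mul_two_pi]
  · show M < ∫ x in Icc (0 : Fin d → ℝ) (fun _ => 2 * π),
      ∑ j, ‖fderiv ℝ (fun y => Complex.exp (Complex.I *
        ((lam * Real.sin (y j₀ - c) : ℝ) : ℂ)) * ψ₀ y) x (Pi.single j 1)‖ ^ 2
    set F : (Fin d → ℝ) → ℂ :=
      fun y => Complex.exp (Complex.I * ((lam * Real.sin (y j₀ - c) : ℝ) : ℂ)) * ψ₀ y with hF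
    set f : (Fin d → ℝ) → ℝ :=
      fun x => ∑ j, ‖fderiv ℝ F x (Pi.single j 1)‖ ^ 2 with hf
    have hθs : ContDiff ℝ 1 (fun y : Fin d → ℝ => lam * Real.sin (y j₀ - c)) :=
      contDiff_const.mul (Real.contDiff_sin.comp
        (((ContinuousLinearMap.proj j₀ : (Fin d → ℝ) →L[ℝ] ℝ).contDiff).sub contDiff_const))
    have hFc : ContDiff ℝ 1 F := by
      apply ContDiff.mul _ hψ
      exact (Complex.contDiff_exp (𝕜 := ℝ)).comp
        (contDiff_const.mul (Complex.ofRealCLM.contDiff.comp hθs))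
    have hfcont : Continuous f := by
      apply continuous_finset_sum
      intro j _
      exact (((ContinuousLinearMap.apply ℝ ℂ (Pi.single j 1)).continuous.comp
        (hFc.continuous_fderiv one_ne_zero)).norm.pow 2)
    have hInt : IntegrableOn f (Icc (0 : Fin d → ℝ) (fun _ => 2 * π)) :=
      hfcont.continuousOn.integrableOn_compact isCompact_Icc
    have hIntB : IntegrableOn f B := hInt.mono_set hBIcc
    have hfnn : ∀ x, 0 ≤ f x := by
      intro x; apply Finset.sum_nonneg; intro j _; positivity
    -- pointwise lower bound on B
    have hpt : ∀ x ∈ B, K ^ 2 ≤ f x := by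
      intro x hx
      have hgx : r / 2 < g x := hball (hBball hx)
      have hder := aux_fderiv ψ₀ hψd lam c j₀ x
      have hbx : ‖fderiv ℝ ψ₀ x (Pi.single j₀ 1)‖ ≤ C' := hC'b x (hBIcc hx)
      set A : ℂ := fderiv ℝ ψ₀ x (Pi.single j₀ 1) with hA
      set Bt : ℂ := Complex.I * ((lam * Real.cos (x j₀ - c) : ℝ) : ℂ) * ψ₀ x with hBt
      have hnorm : ‖fderiv ℝ F x (Pi.single j₀ 1)‖ = ‖A + Bt‖ := by
        rw [hder, norm_mul, norm_exp_I_mul, one_mul]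
      have h6 : ‖Bt‖ - ‖A‖ ≤ ‖A + Bt‖ := by
        have := norm_sub_norm_le Bt (-A)
        simpa [sub_neg_eq_add, add_comm] using this
      have hBtn : ‖Bt‖ = |lam * Real.cos (x j₀ - c)| * ‖ψ₀ x‖ := by
        rw [hBt, norm_mul, norm_mul, Complex.norm_I, one_mul, Complex.norm_real,
          Real.norm_eq_abs]
      have h7 : lam * g x ≤ ‖Bt‖ := by
        rw [hBtn, hg]
        have h8 : lam * (Real.cos (x j₀ - c) * ‖ψ₀ x‖)
            ≤ |lam * Real.cos (x j₀ - c)| * ‖ψ₀ x‖ := by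
          rw [← mul_assoc]
          exact mul_le_mul_of_nonneg_right (le_abs_self _) (norm_nonneg _)
        exact h8
      have h9 : K ≤ ‖A + Bt‖ := by
        have h10 : lam * (r / 2) ≤ lam * g x :=
          mul_le_mul_of_nonneg_left hgx.le hlampos.le
        calc K = (C' + K) - C' := by ring
        _ ≤ lam * g x - ‖A‖ := by rw [← hlamkey]; exact sub_le_sub h10 hbx
        _ ≤ ‖Bt‖ - ‖A‖ := sub_le_sub_right h7 _
        _ ≤ ‖A + Bt‖ := h6
      have h11 : K ^ 2 ≤ ‖fderiv ℝ F x (Pi.single j₀ 1)‖ ^ 2 := by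
        rw [hnorm]
        exact pow_le_pow_left₀ hKpos.le h9 2
      calc K ^ 2 ≤ ‖fderiv ℝ F x (Pi.single j₀ 1)‖ ^ 2 := h11
      _ ≤ f x := Finset.single_le_sum (f := fun j => ‖fderiv ℝ F x (Pi.single j 1)‖ ^ 2)
          (fun j _ => by positivity) (Finset.mem_univ j₀)
    calc M < K ^ 2 * δ ^ d := hKM
    _ = K ^ 2 * (volume B).toReal := by rw [hBvol]
    _ ≤ ∫ x in B, f x := by
        have := setIntegral_ge_of_const_le measurableSet_Icc hBfin hpt hIntB
        rw [smul_eq_mul, mul_comm] at this; exact this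
    _ ≤ ∫ x in Icc (0 : Fin d → ℝ) (fun _ => 2 * π), f x :=
        setIntegral_mono_set hInt (Filter.Eventually.of_forall hfnn)
          (HasSubset.Subset.eventuallyLE hBIcc)
end
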